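/- Let f : X → Y be a continuous open surjection between topological spaces where X is second-countable and Baire. If F ⊆ X is closed nowhere dense, then ∃*_f(F) = {y ∈ Y : F ∩ f⁻¹(y) is nonmeager in f⁻¹(y)} is meager in Y. Consequently, if F ⊆ X is meager, then ∃*_f(F) is meager in Y. -/

import Mathlib

/-!
If `F` is closed nowhere dense, `U = Fᶜ` is open and dense. For an open `b ⊆ X` the set
`f '' (b ∩ U)` is open and dense in `f '' b`, so `f '' b \ f '' (b ∩ U)` is nowhere dense in `Y`.
Off the union of these sets over a countable basis, every basic open set meeting the fibre
`f ⁻¹' {y}` meets it inside `U`; then `F` traces a closed set with dense complement on the fibre,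
which is nowhere dense. A meagre `F` is covered by countably many closed nowhere dense sets, and
`∃*_f` commutes with countable unions up to inclusion.
-/

open Set

/-- The Baire category quantifier `∃*_f(A)`. -/
def fibNonmeager {X Y : Type*} [TopologicalSpace X] (f : X → Y) (A : Set X) : Set Y :=
  {y | ¬ IsMeagre (Subtype.val ⁻¹' A : Set (f ⁻¹' {y}))}

section

open TopologicalSpace

variable {X Y : Type*} [TopologicalSpace X]

theorem IsOpen.isNowhereDense_frontier {s : Set X} (hs : IsOpen s) :
    IsNowhereDense (frontier s) := by
  rw [IsNowhereDense, isClosed_frontier.closure_eq, ← frontier_compl]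
  exact interior_frontier hs.isClosed_compl

theorem dense_preimage_val_fiber {B : Set (Set X)} (hB : IsTopologicalBasis B) {f : X → Y}
    {U : Set X} {y : Y} (h : ∀ b ∈ B, y ∈ f '' b → y ∈ f '' (b ∩ U)) :
    Dense (Subtype.val ⁻¹' U : Set (f ⁻¹' {y})) := by
  rw [(hB.isInducing Topology.IsInducing.subtypeVal).dense_iff]
  rintro _ ⟨b, hbB, rfl⟩ ⟨⟨x, hx⟩, hxb⟩
  obtain ⟨x', ⟨hx'b, hx'U⟩, hx'y⟩ := h b hbB ⟨x, hxb, hx⟩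
  exact ⟨⟨x', hx'y⟩, hx'b, hx'U⟩

theorem fibNonmeager_mono (f : X → Y) {A B : Set X} (h : A ⊆ B) :
    fibNonmeager f A ⊆ fibNonmeager f B :=
  fun _ hy hB => hy (hB.mono (preimage_mono h))

theorem fibNonmeager_iUnion_subset {ι : Type*} [Countable ι] (f : X → Y) (A : ι → Set X) :
    fibNonmeager f (⋃ i, A i) ⊆ ⋃ i, fibNonmeager f (A i) := by
  intro y hy
  by_contra h
  simp only [mem_iUnion, not_exists] at h
  refine hy ?_
  rw [preimage_iUnion]
  exact isMeagre_iUnion fun i => not_not.mp (h i)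

theorem fibNonmeager_subset_setOf_not_dense_fiber (f : X → Y) {F : Set X} (hF : IsClosed F) :
    fibNonmeager f F ⊆ {y | ¬ Dense (Subtype.val ⁻¹' Fᶜ : Set (f ⁻¹' {y}))} := by
  intro y hy hdense
  refine hy (IsNowhereDense.isMeagre ?_)
  rw [(hF.preimage continuous_subtype_val).isNowhereDense_iff, interior_eq_empty_iff_dense_compl]
  exact hdense

variable [TopologicalSpace Y]

theorem isNowhereDense_image_sdiff_image_inter {f : X → Y} (hc : Continuous f)
    (ho : IsOpenMap f) {U b : Set X} (hU : Dense U) (hUo : IsOpen U) (hb : IsOpen b) :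
    IsNowhereDense (f '' b \ f '' (b ∩ U)) := by
  have hopen : IsOpen (f '' (b ∩ U)) := ho _ (hb.inter hUo)
  refine hopen.isNowhereDense_frontier.mono ?_
  rw [hopen.frontier_eq]
  gcongr
  exact (image_mono (hU.open_subset_closure_inter hb)).trans
    (image_closure_subset_closure_image hc)

theorem isMeagre_setOf_not_dense_fiber [SecondCountableTopology X] {f : X → Y}
    (hc : Continuous f) (ho : IsOpenMap f) {U : Set X} (hU : Dense U) (hUo : IsOpen U) :
    IsMeagre {y | ¬ Dense (Subtype.val ⁻¹' U : Set (f ⁻¹' {y}))} := by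
  refine (isMeagre_biUnion (countable_countableBasis X) fun b hb =>
    (isNowhereDense_image_sdiff_image_inter hc ho hU hUo
      (isOpen_of_mem_countableBasis hb)).isMeagre).mono fun y hy => ?_
  by_contra hnot
  simp only [mem_iUnion, not_exists] at hnot
  exact hy <| dense_preimage_val_fiber (isBasis_countableBasis X) fun b hb hyb =>
    not_not.mp fun h => hnot b hb ⟨hyb, h⟩

theorem isMeagre_fibNonmeager_of_isClosed [SecondCountableTopology X] {f : X → Y}
    (hc : Continuous f) (ho : IsOpenMap f) {F : Set X} (hF : IsClosed F)
    (hFnd : IsNowhereDense F) : IsMeagre (fibNonmeager f F) :=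
  (isMeagre_setOf_not_dense_fiber hc ho (isClosed_isNowhereDense_iff_compl.mp ⟨hF, hFnd⟩).2
    hF.isOpen_compl).mono (fibNonmeager_subset_setOf_not_dense_fiber f hF)

theorem isMeagre_fibNonmeager [SecondCountableTopology X] {f : X → Y}
    (hc : Continuous f) (ho : IsOpenMap f) {F : Set X} (hF : IsMeagre F) :
    IsMeagre (fibNonmeager f F) := by
  obtain ⟨S, hSnd, hSc, hFS⟩ := isMeagre_iff_countable_union_isNowhereDense.mp hF
  have : Countable S := hSc
  have hcover : F ⊆ ⋃ s : S, closure (s : Set X) :=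
    hFS.trans (sUnion_eq_iUnion ▸ iUnion_mono fun s => subset_closure)
  exact (isMeagre_iUnion fun s : S => isMeagre_fibNonmeager_of_isClosed hc ho isClosed_closure
    (hSnd s s.2).closure).mono ((fibNonmeager_mono f hcover).trans
      (fibNonmeager_iUnion_subset f _))
end

theorem stmt_6_general {X Y : Type*} [TopologicalSpace X] [TopologicalSpace Y]
    [SecondCountableTopology X]
    (f : X → Y) (hc : Continuous f) (ho : IsOpenMap f) :
    ∀ F : Set X,
      (IsClosed F → IsNowhereDense F → IsMeagre (fibNonmeager f F)) ∧
      (IsMeagre F → IsMeagre (fibNonmeager f F)) :=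
  fun _ => ⟨isMeagre_fibNonmeager_of_isClosed hc ho, isMeagre_fibNonmeager hc ho⟩

/-- For a continuous open surjection `f : X → Y` with `X`
second-countable and Baire: if `F` is closed nowhere dense then `∃*_f(F)` is
meager in `Y`; consequently if `F` is meager then `∃*_f(F)` is meager in `Y`. -/
theorem stmt_6 {X Y : Type*} [TopologicalSpace X] [TopologicalSpace Y]
    [SecondCountableTopology X] [BaireSpace X]
    (f : X → Y) (hc : Continuous f) (ho : IsOpenMap f) (hs : Function.Surjective f) :
    ∀ F : Set X,
      (IsClosed F → IsNowhereDense F → IsMeagre (fibNonmeager f F)) ∧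
      (IsMeagre F → IsMeagre (fibNonmeager f F)) :=
  stmt_6_general f hc ho
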